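/- arXiv:1511.08447 — 4 statements merged into one kernel-verified Lean document; each statement's English description precedes it below -/
import Mathlib

section
/- Let σ = e₁ … e_k be a run over the event alphabet Σ whose events are pairwise distinct. For 1 ≤ i ≤ k let pre(σ, i) be the set of events e_j with j < i whose process equals the process of e_i. Define the NFA M over Σ with state type Finset Σ, start set {∅}, accept set {σ.toFinset}, and with a transition from state T reading e_i to state T ∪ {e_i} exactly when e_i ∉ T and pre(σ, i) ⊆ T (no other transitions). Then M accepts a word σ' if and only if π_p(σ') = π_p(σ) for every process p. -/
/-!
Reading a word `w` from `∅`, the automaton is always in the state `w.toFinset`, so it accepts `w`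
exactly when `w` lists every event of `σ` once and each event comes after its `pre`-set.
Projected to a process `p`, this makes `π_p w` a permutation of the duplicate-free list `π_p σ`
in which every event is preceded by all of its predecessors in `π_p σ`; such a permutation is
`π_p σ` itself. Conversely, equal projections give every event the same multiplicity in `w` as
in `σ`, and the `pre`-set of `e` is then read off the prefix of `π_p w` before `e`.
-/

variable {Op Proc : Type*}

abbrev Ev (Op Proc : Type*) := Op × Proc × Bool

def IsInv (e : Ev Op Proc) : Prop := e.2.2 = true

def EvMatches (e e' : Ev Op Proc) : Prop :=
  e.1 = e'.1 ∧ e.2.1 = e'.2.1 ∧ e.2.2 = true ∧ e'.2.2 = false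

def proj [DecidableEq Proc] (p : Proc) (σ : List (Ev Op Proc)) : List (Ev Op Proc) :=
  σ.filter (fun e => e.2.1 = p)

def SequentialRun (σ : List (Ev Op Proc)) : Prop :=
  σ = [] ∨
    ((∃ h : 0 < σ.length, IsInv (σ[0]'h)) ∧
     (∀ i, i % 2 = 0 → ∀ h : i + 1 < σ.length,
        EvMatches (σ[i]'(Nat.lt_of_succ_lt h)) (σ[i+1]'h)) ∧
     ((σ.length - 1) % 2 = 0 →
        ∃ h : σ.length - 1 < σ.length, IsInv (σ[σ.length - 1]'h)))

def Legal [DecidableEq Proc] (σ : List (Ev Op Proc)) : Prop :=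
  ∀ p : Proc, SequentialRun (proj p σ)

def Quiescent (σ : List (Ev Op Proc)) : Prop :=
  ∀ σ₁ (e : Ev Op Proc) σ₂, σ = σ₁ ++ e :: σ₂ → IsInv e → ∃ e' ∈ σ₂, EvMatches e e'

def ETEQ (σ : List (Ev Op Proc)) : Prop :=
  Quiescent σ ∧ ∀ u, u <+: σ → u ≠ [] → u ≠ σ → ¬ Quiescent u

/-- pre(σ, e): the events occurring in σ strictly before (the unique occurrence of) e
whose process equals the process of e. -/
def preSet [DecidableEq Op] [DecidableEq Proc] (σ : List (Ev Op Proc)) (e : Ev Op Proc) :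
    Finset (Ev Op Proc) :=
  ((σ.takeWhile (fun x => x ≠ e)).filter (fun x => x.2.1 = e.2.1)).toFinset

/-- The NFA accepting exactly the process-order preserving permutations of σ:
from state T, reading event e of σ, move to T ∪ {e} exactly when e ∉ T and
pre(σ, e) ⊆ T. -/
def procPermNFA [DecidableEq Op] [DecidableEq Proc] (σ : List (Ev Op Proc)) :
    NFA (Ev Op Proc) (Finset (Ev Op Proc)) where
  step := fun T e =>
    if e ∈ σ.toFinset ∧ e ∉ T ∧ preSet σ e ⊆ T then {T ∪ {e}} else ∅
  start := {∅}
  accept := {σ.toFinset}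

namespace List

variable {α : Type*} [DecidableEq α]

theorem takeWhile_ne_append_of_mem {x : α} {l₁ : List α} (l₂ : List α) (h : x ∈ l₁) :
    (l₁ ++ l₂).takeWhile (· ≠ x) = l₁.takeWhile (· ≠ x) := by
  induction l₁ with
  | nil => simp at h
  | cons a l ih =>
    by_cases hax : a = x
    · simp [hax]
    · rw [cons_append, takeWhile_cons_of_pos (by simpa), takeWhile_cons_of_pos (by simpa),
        ih (by simpa [Ne.symm hax] using h)]

theorem takeWhile_ne_append_singleton_of_not_mem {x : α} {l : List α} (h : x ∉ l) :
    (l ++ [x]).takeWhile (· ≠ x) = l := by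
  rw [takeWhile_append_of_pos (by intro a ha; simpa using ne_of_mem_of_not_mem ha h)]
  simp

theorem filter_takeWhile_ne {p : α → Bool} {e : α} (he : p e) (l : List α) :
    (l.filter p).takeWhile (· ≠ e) = (l.takeWhile (· ≠ e)).filter p := by
  rw [takeWhile_filter]
  congr 2
  funext a
  by_cases a = e <;> simp_all

theorem eq_of_perm_of_takeWhile_ne_subset {l₁ l₂ : List α} (hnd : l₁.Nodup) (hp : l₂ ~ l₁)
    (h : ∀ e ∈ l₂, l₁.takeWhile (· ≠ e) ⊆ l₂.takeWhile (· ≠ e)) : l₂ = l₁ := by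
  induction l₁ generalizing l₂ with
  | nil => exact hp.eq_nil
  | cons a t ih =>
    obtain _ | ⟨b, r⟩ := l₂
    · exact absurd hp.symm.eq_nil (cons_ne_nil a t)
    have hba : b = a := by
      by_contra hba
      simpa [Ne.symm hba] using h b mem_cons_self
    subst hba
    have hbr : b ∉ r := (nodup_cons.mp (hp.nodup_iff.mpr hnd)).1
    have hbt : b ∉ t := (nodup_cons.mp hnd).1
    congr
    refine ih (nodup_cons.mp hnd).2 hp.cons_inv fun e he x hx => ?_
    have heb : b ≠ e := (ne_of_mem_of_not_mem he hbr).symm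
    have hxb : x ≠ b := ne_of_mem_of_not_mem (takeWhile_subset _ hx) hbt
    have := h e (mem_cons_of_mem b he)
    rw [takeWhile_cons_of_pos (by simpa), takeWhile_cons_of_pos (by simpa)] at this
    simpa [hxb] using this (mem_cons_of_mem b hx)

end List

section

variable [DecidableEq Proc]

theorem mem_proj {p : Proc} {l : List (Ev Op Proc)} {x : Ev Op Proc} :
    x ∈ proj p l ↔ x ∈ l ∧ x.2.1 = p := by
  simp [proj]

theorem perm_of_proj_eq {w σ : List (Ev Op Proc)} (h : ∀ p, proj p w = proj p σ) : w.Perm σ := by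
  classical
  refine List.perm_iff_count.mpr fun x => ?_
  have hx : ∀ l : List (Ev Op Proc), (proj x.2.1 l).count x = l.count x :=
    fun l => List.count_filter (by simp)
  rw [← hx w, ← hx σ, h]

variable [DecidableEq Op]

theorem preSet_eq_takeWhile_proj (σ : List (Ev Op Proc)) (e : Ev Op Proc) :
    preSet σ e = ((proj e.2.1 σ).takeWhile (· ≠ e)).toFinset := by
  rw [preSet, proj, List.filter_takeWhile_ne (by simp)]

def RespectsProcOrder (σ w : List (Ev Op Proc)) : Prop :=
  w.Nodup ∧ ∀ e ∈ w, e ∈ σ ∧ preSet σ e ⊆ (w.takeWhile (· ≠ e)).toFinset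

theorem respectsProcOrder_append_singleton {σ w : List (Ev Op Proc)} {e : Ev Op Proc} :
    RespectsProcOrder σ (w ++ [e]) ↔
      RespectsProcOrder σ w ∧ e ∈ σ.toFinset ∧ e ∉ w.toFinset ∧ preSet σ e ⊆ w.toFinset := by
  have hnd : (w ++ [e]).Nodup ↔ w.Nodup ∧ e ∉ w := by
    rw [← List.concat_eq_append, List.nodup_concat, and_comm]
  by_cases hew : e ∈ w
  · simp [RespectsProcOrder, hnd, hew]
  have htw : ∀ x ∈ w, (w ++ [e]).takeWhile (· ≠ x) = w.takeWhile (· ≠ x) :=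
    fun x hx => List.takeWhile_ne_append_of_mem _ hx
  simp only [RespectsProcOrder, hnd, List.forall_mem_append, List.forall_mem_singleton,
    List.takeWhile_ne_append_singleton_of_not_mem hew, List.mem_toFinset, hew]
  rw [forall₂_congr fun x hx => by rw [htw x hx]]
  tauto

theorem mem_evalFrom_procPermNFA_iff {σ w : List (Ev Op Proc)} {S : Finset (Ev Op Proc)} :
    S ∈ (procPermNFA σ).evalFrom {∅} w ↔ S = w.toFinset ∧ RespectsProcOrder σ w := by
  induction w using List.reverseRecOn generalizing S with
  | nil => simp [RespectsProcOrder]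
  | append_singleton w e ih =>
    rw [NFA.evalFrom_append, NFA.evalFrom_singleton, NFA.mem_stepSet]
    simp only [ih, and_assoc, exists_eq_left, respectsProcOrder_append_singleton]
    change _ ∧ S ∈ (if _ then _ else _) ↔ _
    split_ifs with hc
    · have hT : (w ++ [e]).toFinset = w.toFinset ∪ {e} := by simp
      simp only [Set.mem_singleton_iff, hT, hc, not_false_eq_true, and_true]
      exact and_comm
    · simp only [Set.mem_empty_iff_false, and_false, false_iff]
      tauto

theorem mem_accepts_procPermNFA_iff {σ w : List (Ev Op Proc)} :
    w ∈ (procPermNFA σ).accepts ↔ w.toFinset = σ.toFinset ∧ RespectsProcOrder σ w := by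
  rw [NFA.mem_accepts]
  change (∃ S ∈ ({σ.toFinset} : Set _), S ∈ (procPermNFA σ).evalFrom {∅} w) ↔ _
  simp [mem_evalFrom_procPermNFA_iff, eq_comm]

theorem RespectsProcOrder.proj_eq {σ w : List (Ev Op Proc)} (hσ : σ.Nodup)
    (hw : RespectsProcOrder σ w) (hfs : w.toFinset = σ.toFinset) (p : Proc) :
    proj p w = proj p σ := by
  have hperm : w.Perm σ := List.perm_of_nodup_nodup_toFinset_eq hw.1 hσ hfs
  refine List.eq_of_perm_of_takeWhile_ne_subset (hσ.filter _) (hperm.filter _) fun e he x hx => ?_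
  obtain ⟨heσ', rfl⟩ := mem_proj.mp he
  have hxσ : x ∈ preSet σ e := by
    rw [preSet_eq_takeWhile_proj]; exact List.mem_toFinset.mpr hx
  rw [proj, List.filter_takeWhile_ne (by simp)]
  exact List.mem_filter.mpr ⟨List.mem_toFinset.mp ((hw.2 e heσ').2 hxσ),
    by simpa using (mem_proj.mp (List.takeWhile_subset _ hx)).2⟩

theorem respectsProcOrder_of_proj_eq {σ w : List (Ev Op Proc)} (hσ : σ.Nodup)
    (h : ∀ p, proj p w = proj p σ) : RespectsProcOrder σ w := by
  have hperm := perm_of_proj_eq h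
  refine ⟨hperm.nodup_iff.mpr hσ, fun e he => ⟨hperm.subset he, ?_⟩⟩
  rw [preSet_eq_takeWhile_proj, ← h, proj, List.filter_takeWhile_ne (by simp)]
  exact Multiset.toFinset_subset.mpr (List.filter_subset_self _)

end

/-- For σ with pairwise distinct events, procPermNFA σ accepts σ' iff σ' has the same
per-process projections as σ. -/
theorem procPermNFA_accepts_iff_proj_eq [DecidableEq Op] [DecidableEq Proc]
    (σ : List (Ev Op Proc)) (hσ : σ.Nodup) :
    ∀ σ' : List (Ev Op Proc),
      σ' ∈ (procPermNFA σ).accepts ↔ ∀ p : Proc, proj p σ' = proj p σ := by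
  intro σ'
  rw [mem_accepts_procPermNFA_iff]
  exact ⟨fun ⟨hfs, hw⟩ => hw.proj_eq hσ hfs, fun h =>
    ⟨List.toFinset_eq_of_perm _ _ (perm_of_proj_eq h), respectsProcOrder_of_proj_eq hσ h⟩⟩
end

section
/- Let L_S be a language over Σ such that every word in L_S is sequential and quiescent. Let σ = σ₁ ++ … ++ σ_k be a legal quiescent run in which each σ_i is non-empty, legal, and end-to-end quiescent, and let σ^δ = [δ] ++ σ₁ ++ [δ] ++ σ₂ ++ [δ] ++ … ++ [δ] ++ σ_k ++ [δ]. Then there exist runs τ₁, …, τ_k with τ_i a permutation (List.Perm) of σ_i for each 1 ≤ i ≤ k and τ₁ ++ … ++ τ_k ∈ L_S, if and only if σ^δ ∈ 𝓛_U(S_δ). -/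
/-!
Cutting a word over Σ_δ at its δ's gives its list of blocks. Swapping two adjacent letters of Σ
permutes the letters of a single block, so every word in the 𝓛_U-class of σ^δ has blocks that are
permutations of `[], σ₁, …, σ_k, []`; conversely, permuting inside the blocks of σ^δ is achieved
by such swaps. This gives both directions, once we know that each τ^δ lies in S_δ whenever
τ₁ ⋯ τ_k ∈ L_S. The δ-prefixes of τ^δ erase to the prefixes τ₁ ⋯ τ_j, which are quiescent:
a legal quiescent σ_i has even length (every projection of it is sequential and quiescent, hence
of even length), and an even-length prefix of a sequential run is quiescent.
-/

variable {Op Proc : Type*}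

/-- The alphabet Σ_δ: events together with a fresh quiescence symbol δ. -/
abbrev EvD (Op Proc : Type*) := Ev Op Proc ⊕ Unit

/-- The quiescence symbol δ. -/
def dd : EvD Op Proc := Sum.inr ()

/-- π_Σ: remove all occurrences of δ. -/
def piSigma (w : List (EvD Op Proc)) : List (Ev Op Proc) :=
  w.filterMap Sum.getLeft?

/-- S_δ: the words over Σ_δ whose δ-erasure is in L_S and all of whose prefixes
ending in δ have quiescent δ-erasure. -/
def Sdelta (L_S : Set (List (Ev Op Proc))) : Set (List (EvD Op Proc)) :=
  {w | piSigma w ∈ L_S ∧ ∀ u : List (EvD Op Proc), u ++ [dd] <+: w → Quiescent (piSigma u)}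

/-- One swap of two adjacent letters related by the independence relation I. -/
inductive SwapStep {A : Type*} (I : A → A → Prop) : List A → List A → Prop
  | swap (u v : List A) (a b : A) : I a b → SwapStep I (u ++ a :: b :: v) (u ++ b :: a :: v)

/-- The universal independence relation on Σ_δ: any two events from Σ commute. -/
def IndepU (x y : EvD Op Proc) : Prop :=
  ∃ a b : Ev Op Proc, x = Sum.inl a ∧ y = Sum.inl b

/-- 𝓛_U(L): closure of L under swaps of adjacent Σ-letters. -/
def LU (L : Set (List (EvD Op Proc))) : Set (List (EvD Op Proc)) :=
  {w' | ∃ w ∈ L, Relation.ReflTransGen (SwapStep (IndepU (Op := Op) (Proc := Proc))) w w'}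

/-- The word [δ] ++ σ₁ ++ [δ] ++ σ₂ ++ [δ] ++ … ++ [δ] ++ σ_k ++ [δ]. -/
def sigmaDelta (L : List (List (Ev Op Proc))) : List (EvD Op Proc) :=
  [dd] ++ List.intercalate [dd] (L.map (List.map Sum.inl)) ++ [dd]

theorem List.Forall₂.exists_mem_right {α β : Type*} {R : α → β → Prop} {l₁ : List α}
    {l₂ : List β} (h : List.Forall₂ R l₁ l₂) {a : α} (ha : a ∈ l₁) : ∃ b ∈ l₂, R a b := by
  induction h with
  | nil => simp at ha
  | cons hab _ ih =>
    rcases List.mem_cons.1 ha with rfl | ha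
    · exact ⟨_, List.mem_cons_self, hab⟩
    · obtain ⟨b, hb, hab⟩ := ih ha
      exact ⟨b, List.mem_cons_of_mem _ hb, hab⟩

theorem List.Forall₂.perm_trans {α : Type*} {X Y Z : List (List α)}
    (hXY : List.Forall₂ List.Perm X Y) (hYZ : List.Forall₂ List.Perm Y Z) :
    List.Forall₂ List.Perm X Z := by
  induction hXY generalizing Z with
  | nil => exact hYZ
  | cons hxy _ ih =>
    cases hYZ with
    | cons hyz hYZ => exact .cons (hxy.trans hyz) (ih hYZ)

section SwapSteps

variable {A : Type*} {I : A → A → Prop}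

theorem SwapStep.append_congr {x y : List A} (h : SwapStep I x y) (p q : List A) :
    SwapStep I (p ++ x ++ q) (p ++ y ++ q) := by
  obtain ⟨u, v, a, b, hab⟩ := h
  simpa using SwapStep.swap (p ++ u) (v ++ q) a b hab

theorem reflTransGen_swapStep_append_congr {x y : List A}
    (h : Relation.ReflTransGen (SwapStep I) x y) (p q : List A) :
    Relation.ReflTransGen (SwapStep I) (p ++ x ++ q) (p ++ y ++ q) :=
  h.lift _ fun _ _ hs => hs.append_congr p q

theorem reflTransGen_swapStep_intercalate (s : List A) {X Y : List (List A)}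
    (h : List.Forall₂ (Relation.ReflTransGen (SwapStep I)) X Y) :
    Relation.ReflTransGen (SwapStep I) (s.intercalate X) (s.intercalate Y) := by
  induction h with
  | nil => exact .refl
  | @cons x y X Y hxy hXY ih =>
    cases hXY with
    | nil => simpa using hxy
    | @cons x' y' X' Y' _ _ =>
      rw [List.intercalate_cons_cons, List.intercalate_cons_cons]
      have hhead := reflTransGen_swapStep_append_congr hxy [] (s ++ s.intercalate (x' :: X'))
      have htail := reflTransGen_swapStep_append_congr ih (y ++ s) []
      simp only [List.nil_append, List.append_nil, List.append_assoc] at hhead htail ⊢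
      exact hhead.trans htail

end SwapSteps

theorem quiescent_of_forall_getElem {σ : List (Ev Op Proc)}
    (h : ∀ i (hi : i < σ.length), IsInv σ[i] →
      ∃ j, ∃ hj : i < j ∧ j < σ.length, EvMatches σ[i] σ[j]) :
    Quiescent σ := by
  rintro σ₁ e σ₂ rfl he
  have hi : σ₁.length < (σ₁ ++ e :: σ₂).length := by simp
  obtain ⟨j, ⟨hij, hj⟩, hm⟩ := h σ₁.length hi (by simpa using he)
  have hj' : j - σ₁.length - 1 < σ₂.length := by simp at hj; omega
  have hget : (σ₁ ++ e :: σ₂)[j] = σ₂[j - σ₁.length - 1] := by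
    rw [List.getElem_append_right (by omega), List.getElem_cons, dif_neg (by omega)]
  refine ⟨_, List.getElem_mem hj', ?_⟩
  simpa [hget] using hm

theorem SequentialRun.not_isInv_of_odd {σ : List (Ev Op Proc)} (hs : SequentialRun σ)
    {i : ℕ} (hodd : i % 2 = 1) (hi : i < σ.length) : ¬ IsInv σ[i] := by
  rcases hs with rfl | ⟨-, hmatch, -⟩
  · simp at hi
  · obtain ⟨k, rfl⟩ : ∃ k, i = k + 1 := ⟨i - 1, by omega⟩
    simp [IsInv, (hmatch k (by omega) hi).2.2.2]

theorem SequentialRun.quiescent_of_isPrefix {σ u : List (Ev Op Proc)} (hs : SequentialRun σ)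
    (hpre : u <+: σ) (heven : 2 ∣ u.length) : Quiescent u := by
  refine quiescent_of_forall_getElem fun i hi hinv => ?_
  rw [hpre.getElem hi] at hinv
  have hieven : i % 2 = 0 := by
    by_contra hodd
    exact hs.not_isInv_of_odd (by omega) _ hinv
  have hi1 : i + 1 < u.length := by omega
  refine ⟨i + 1, ⟨by omega, hi1⟩, ?_⟩
  rw [hpre.getElem hi, hpre.getElem hi1]
  rcases hs with h | ⟨-, hmatch, -⟩
  · simp [List.prefix_nil.1 (h ▸ hpre)] at hi
  · exact hmatch i hieven _

theorem SequentialRun.even_length_of_quiescent {σ : List (Ev Op Proc)} (hs : SequentialRun σ)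
    (hq : Quiescent σ) : 2 ∣ σ.length := by
  rcases hs with rfl | ⟨-, -, hlast⟩
  · simp
  by_contra hodd
  obtain ⟨hlt, hinv⟩ := hlast (by omega)
  have hne : σ ≠ [] := List.ne_nil_of_length_pos (by omega)
  obtain ⟨_, hmem, -⟩ := hq σ.dropLast (σ.getLast hne) []
    (List.dropLast_append_getLast hne).symm (by rwa [List.getLast_eq_getElem])
  simp at hmem

theorem Quiescent.proj [DecidableEq Proc] {σ : List (Ev Op Proc)} (hq : Quiescent σ)
    (p : Proc) : Quiescent (proj p σ) := by
  intro u₁ e u₂ h he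
  obtain ⟨σ₁, σ', rfl, -, hσ'⟩ := List.filter_eq_append_iff.1 h
  obtain ⟨σ₂, σ₃, rfl, -, hep, hσ₃⟩ := List.filter_eq_cons_iff.1 hσ'
  obtain ⟨e', hmem, hm⟩ := hq (σ₁ ++ σ₂) e σ₃ (by simp) he
  refine ⟨e', hσ₃ ▸ List.mem_filter.2 ⟨hmem, ?_⟩, hm⟩
  simpa [← hm.2.1] using hep

theorem length_proj_eq_count [DecidableEq Proc] (p : Proc) (σ : List (Ev Op Proc)) :
    (proj p σ).length = (σ.map (·.2.1)).count p := by
  rw [List.count, List.countP_map, List.countP_eq_length_filter]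
  rfl

theorem Legal.even_length_of_quiescent [DecidableEq Proc] {σ : List (Ev Op Proc)}
    (hl : Legal σ) (hq : Quiescent σ) : 2 ∣ σ.length := by
  rw [← List.length_map (f := (·.2.1)), ← List.sum_map_count_dedup_eq_length]
  refine List.dvd_sum fun n hn => ?_
  obtain ⟨p, -, rfl⟩ := List.mem_map.1 hn
  rw [← length_proj_eq_count]
  exact (hl p).even_length_of_quiescent (hq.proj p)

def blocks : List (EvD Op Proc) → List (List (Ev Op Proc))
  | [] => [[]]
  | Sum.inl a :: w => (a :: (blocks w).headI) :: (blocks w).tail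
  | Sum.inr _ :: w => [] :: blocks w

theorem blocks_ne_nil (w : List (EvD Op Proc)) : blocks w ≠ [] := by
  rcases w with _ | ⟨_ | _, _⟩ <;> simp [blocks]

theorem blocks_append_dd_cons (u v : List (EvD Op Proc)) :
    blocks (u ++ dd :: v) = blocks u ++ blocks v := by
  induction u with
  | nil => rfl
  | cons x u ih =>
    obtain ⟨b, bs, hb⟩ := List.exists_cons_of_ne_nil (blocks_ne_nil u)
    rcases x with a | _ <;> simp [blocks, ih, hb]

theorem blocks_map_inl (l : List (Ev Op Proc)) : blocks (l.map Sum.inl) = [l] := by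
  induction l with
  | nil => rfl
  | cons a l ih => simp [blocks, ih]

theorem blocks_intercalate {L : List (List (Ev Op Proc))} (hL : L ≠ []) :
    blocks ([dd].intercalate (L.map (List.map Sum.inl))) = L := by
  induction L with
  | nil => contradiction
  | cons l L ih =>
    rcases L with _ | ⟨l', L⟩
    · simp [blocks_map_inl]
    · rw [List.map_cons, List.map_cons, List.intercalate_cons_cons, List.append_assoc,
        List.singleton_append, blocks_append_dd_cons, blocks_map_inl, ← List.map_cons,
        ih (List.cons_ne_nil _ _), List.singleton_append]

theorem blocks_sigmaDelta {L : List (List (Ev Op Proc))} (hL : L ≠ []) :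
    blocks (sigmaDelta L) = [] :: L ++ [[]] := by
  have h : sigmaDelta L =
      [] ++ dd :: ([dd].intercalate (L.map (List.map Sum.inl)) ++ dd :: []) := by
    simp [sigmaDelta]
  rw [h, blocks_append_dd_cons, blocks_append_dd_cons, blocks_intercalate hL]
  rfl

theorem piSigma_eq_flatten_blocks (w : List (EvD Op Proc)) :
    piSigma w = (blocks w).flatten := by
  induction w with
  | nil => rfl
  | cons x w ih =>
    obtain ⟨b, bs, hb⟩ := List.exists_cons_of_ne_nil (blocks_ne_nil w)
    rcases x with a | _ <;> simp_all [piSigma, blocks, List.filterMap_cons]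

theorem piSigma_sigmaDelta (L : List (List (Ev Op Proc))) :
    piSigma (sigmaDelta L) = L.flatten := by
  rcases eq_or_ne L [] with rfl | hL
  · rfl
  · simp [piSigma_eq_flatten_blocks, blocks_sigmaDelta hL]

theorem mem_blocks_sigmaDelta {L : List (List (Ev Op Proc))} {b : List (Ev Op Proc)}
    (hb : b ∈ blocks (sigmaDelta L)) : b = [] ∨ b ∈ L := by
  rcases eq_or_ne L [] with rfl | hL
  · have hnil : blocks (sigmaDelta ([] : List (List (Ev Op Proc)))) = [[], [], []] := rfl
    simpa [hnil] using hb
  · simp only [blocks_sigmaDelta hL, List.cons_append, List.mem_cons, List.mem_append] at hb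
    tauto

theorem sigmaDelta_mem_Sdelta {L_S : Set (List (Ev Op Proc))} {T : List (List (Ev Op Proc))}
    (hseq : SequentialRun T.flatten) (hT : T.flatten ∈ L_S) (heven : ∀ t ∈ T, 2 ∣ t.length) :
    sigmaDelta T ∈ Sdelta L_S := by
  refine ⟨(piSigma_sigmaDelta T).symm ▸ hT, fun u ⟨v, huv⟩ => ?_⟩
  have hsplit : blocks u ++ blocks v = blocks (sigmaDelta T) := by
    rw [← huv, List.append_assoc, List.singleton_append, blocks_append_dd_cons]
  refine hseq.quiescent_of_isPrefix ?_ ?_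
  · rw [← piSigma_sigmaDelta]
    have hpre : u <+: sigmaDelta T := ⟨[dd] ++ v, by rw [← List.append_assoc, huv]⟩
    exact hpre.filterMap _
  · rw [piSigma_eq_flatten_blocks, List.length_flatten]
    refine List.dvd_sum fun n hn => ?_
    obtain ⟨b, hb, rfl⟩ := List.mem_map.1 hn
    rcases mem_blocks_sigmaDelta (hsplit ▸ List.mem_append_left _ hb) with rfl | hbT
    · simp
    · exact heven b hbT

theorem List.Perm.reflTransGen_swapStep {t s : List (Ev Op Proc)} (h : t.Perm s) :
    Relation.ReflTransGen (SwapStep IndepU) (t.map Sum.inl) (s.map Sum.inl) := by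
  induction h with
  | nil => exact .refl
  | cons a _ ih => simpa using reflTransGen_swapStep_append_congr ih [Sum.inl a] []
  | swap a b l => simpa using .single (SwapStep.swap [] (l.map Sum.inl) _ _ ⟨b, a, rfl, rfl⟩)
  | trans _ _ ih₁ ih₂ => exact ih₁.trans ih₂

theorem reflTransGen_swapStep_sigmaDelta {T L : List (List (Ev Op Proc))}
    (h : List.Forall₂ List.Perm T L) :
    Relation.ReflTransGen (SwapStep IndepU) (sigmaDelta T) (sigmaDelta L) := by
  refine reflTransGen_swapStep_append_congr (reflTransGen_swapStep_intercalate _ ?_) [dd] [dd]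
  simpa only [List.forall₂_map_left_iff, List.forall₂_map_right_iff] using
    h.imp fun _ _ hp => hp.reflTransGen_swapStep

theorem forall₂_perm_blocks_cons (x : EvD Op Proc) {w w' : List (EvD Op Proc)}
    (h : List.Forall₂ List.Perm (blocks w) (blocks w')) :
    List.Forall₂ List.Perm (blocks (x :: w)) (blocks (x :: w')) := by
  rcases x with a | _
  · obtain ⟨c, cs, hc⟩ := List.exists_cons_of_ne_nil (blocks_ne_nil w)
    rw [hc] at h
    obtain ⟨c', cs', hp, h, hc'⟩ := List.forall₂_cons_left_iff.1 h
    simp only [blocks, hc, hc', List.headI, List.tail]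
    exact .cons (hp.cons a) h
  · exact .cons (.refl _) h

theorem SwapStep.forall₂_perm_blocks {w w' : List (EvD Op Proc)}
    (h : SwapStep IndepU w w') : List.Forall₂ List.Perm (blocks w) (blocks w') := by
  obtain ⟨u, v, _, _, ⟨a, b, rfl, rfl⟩⟩ := h
  induction u with
  | nil =>
    obtain ⟨c, cs, hc⟩ := List.exists_cons_of_ne_nil (blocks_ne_nil v)
    simp only [List.nil_append, blocks, hc, List.headI, List.tail]
    exact .cons (.swap b a c) (List.forall₂_same.2 fun _ _ => .refl _)
  | cons x u ih => exact forall₂_perm_blocks_cons x ih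

theorem forall₂_perm_blocks_of_reflTransGen {w w' : List (EvD Op Proc)}
    (h : Relation.ReflTransGen (SwapStep IndepU) w w') :
    List.Forall₂ List.Perm (blocks w) (blocks w') := by
  induction h with
  | refl => exact List.forall₂_same.2 fun _ _ => .refl _
  | tail _ hs ih => exact ih.perm_trans hs.forall₂_perm_blocks

theorem exists_forall₂_perm_of_forall₂_perm_blocks {B L : List (List (Ev Op Proc))}
    (h : List.Forall₂ List.Perm B (blocks (sigmaDelta L))) :
    ∃ T, List.Forall₂ List.Perm T L ∧ T.flatten = B.flatten := by
  rcases eq_or_ne L [] with rfl | hL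
  · exact ⟨[], .nil, ((List.Perm.flatten_congr h).eq_nil).symm⟩
  · rw [blocks_sigmaDelta hL] at h
    obtain ⟨b, B, hb, hB, rfl⟩ := List.forall₂_cons_right_iff.1 h
    refine ⟨B.take L.length, List.forall₂_take_append _ _ _ hB, ?_⟩
    have hdrop : (B.drop L.length).flatten = [] :=
      (List.Perm.flatten_congr (List.forall₂_drop_append _ _ _ hB)).eq_nil
    rw [hb.eq_nil, List.flatten_cons, List.nil_append, ← List.append_nil (List.flatten _),
      ← hdrop, ← List.flatten_append, List.take_append_drop]

theorem qc_allowed_iff_mem_LU_Sdelta_general [DecidableEq Proc]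
    (L_S : Set (List (Ev Op Proc)))
    (hLS : ∀ w ∈ L_S, SequentialRun w ∧ Quiescent w)
    (L : List (List (Ev Op Proc)))
    (hpieces : ∀ u ∈ L, u ≠ [] ∧ Legal u ∧ ETEQ u) :
    (∃ T : List (List (Ev Op Proc)),
        List.Forall₂ (fun t s => t.Perm s) T L ∧ T.flatten ∈ L_S) ↔
      sigmaDelta L ∈ LU (Sdelta L_S) := by
  constructor
  · rintro ⟨T, hTL, hT⟩
    have heven : ∀ t ∈ T, 2 ∣ t.length := fun t ht => by
      obtain ⟨s, hs, hts⟩ := hTL.exists_mem_right ht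
      obtain ⟨-, hlegal, hquiescent, -⟩ := hpieces s hs
      exact hts.length_eq ▸ hlegal.even_length_of_quiescent hquiescent
    exact ⟨sigmaDelta T, sigmaDelta_mem_Sdelta (hLS _ hT).1 hT heven,
      reflTransGen_swapStep_sigmaDelta hTL⟩
  · rintro ⟨w, ⟨hw, -⟩, hsteps⟩
    obtain ⟨T, hTL, hflat⟩ :=
      exists_forall₂_perm_of_forall₂_perm_blocks (forall₂_perm_blocks_of_reflTransGen hsteps)
    exact ⟨T, hTL, by rwa [hflat, ← piSigma_eq_flatten_blocks]⟩

/-- Membership: σ is allowed by L_S under quiescent consistency iff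
σ^δ ∈ 𝓛_U(S_δ). -/
theorem qc_allowed_iff_mem_LU_Sdelta [DecidableEq Proc]
    (L_S : Set (List (Ev Op Proc)))
    (hLS : ∀ w ∈ L_S, SequentialRun w ∧ Quiescent w)
    (L : List (List (Ev Op Proc)))
    (hlegal : Legal L.flatten) (hquies : Quiescent L.flatten)
    (hpieces : ∀ u ∈ L, u ≠ [] ∧ Legal u ∧ ETEQ u) :
    (∃ T : List (List (Ev Op Proc)),
        List.Forall₂ (fun t s => t.Perm s) T L ∧ T.flatten ∈ L_S) ↔
      sigmaDelta L ∈ LU (Sdelta L_S) :=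
  qc_allowed_iff_mem_LU_Sdelta_general L_S hLS L hpieces
end

section
/- Assume the process type Proc is nonempty. Let L_S be a language over Σ such that every word in L_S is sequential and quiescent. Let σ = σ₁ ++ … ++ σ_k be a legal quiescent run in which each σ_i is non-empty, legal, and end-to-end quiescent, and let σ^δ = [δ] ++ σ₁ ++ [δ] ++ … ++ [δ] ++ σ_k ++ [δ]. Then the following are equivalent: (1) there exist runs σ'₁, …, σ'_k with π_p(σ'_i) = π_p(σ_i) for every process p and each 1 ≤ i ≤ k such that σ'₁ ++ … ++ σ'_k ∈ L_S (σ is allowed by L_S under quiescent sequential consistency); (2) there exists w ∈ S_δ with w ≈ σ^δ; (3) σ^δ ∈ 𝓛_R(S_δ). -/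
/-!
Cutting a word over Σ_δ at its δ's, `w ≈ σ^δ` forces `w` to have the same δ's as `σ^δ`
and, between consecutive δ's, blocks with the same per-process projections as the `σᵢ`; that is,
`w = σ'^δ` for runs `σ'ᵢ` as in (1). Such a `σ'^δ` lies in `S_δ` because quiescence is a
per-process property, so every `σ'ᵢ` is quiescent like `σᵢ`, and the prefixes of `σ'^δ`
ending in δ erase to concatenations of the `σ'ᵢ`.

For (2) ⇔ (3): swapping adjacent events of distinct processes preserves every `π_p^δ`, and
conversely, if `w ≈ w'`, the first letter of `w` can be bubbled to the front of `w'` past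
letters of other processes, after which induction applies.
-/

variable {Op Proc : Type*}

/-- π_p^δ: keep all δ's and the events of process p. -/
def projD [DecidableEq Proc] (p : Proc) (w : List (EvD Op Proc)) : List (EvD Op Proc) :=
  w.filter (fun x => Sum.elim (fun e : Ev Op Proc => decide (e.2.1 = p)) (fun _ => true) x)

/-- w ≈ w' iff π_p^δ(w) = π_p^δ(w') for every process p. -/
def ApproxD [DecidableEq Proc] (w w' : List (EvD Op Proc)) : Prop :=
  ∀ p : Proc, projD p w = projD p w'

/-- The independence relation R on Σ_δ: two Σ-events commute iff their processes differ. -/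
def IndepRD (x y : EvD Op Proc) : Prop :=
  ∃ a b : Ev Op Proc, x = Sum.inl a ∧ y = Sum.inl b ∧ a.2.1 ≠ b.2.1

/-- 𝓛_R(L): closure of L under swaps of adjacent Σ-letters with distinct processes. -/
def LR (L : Set (List (EvD Op Proc))) : Set (List (EvD Op Proc)) :=
  {w' | ∃ w ∈ L, Relation.ReflTransGen (SwapStep (IndepRD (Op := Op) (Proc := Proc))) w w'}

def ProcEquiv [DecidableEq Proc] (u v : List (Ev Op Proc)) : Prop :=
  ∀ p : Proc, proj p u = proj p v

theorem eq_nil_of_procEquiv_nil [DecidableEq Proc] {u : List (Ev Op Proc)}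
    (h : ProcEquiv u []) : u = [] := by
  refine List.eq_nil_iff_forall_not_mem.2 fun e he => ?_
  have := h e.2.1
  simp only [proj, List.filter_nil, List.filter_eq_nil_iff] at this
  exact this e he (by simp)

section Quiescence

theorem quiescent_nil : Quiescent ([] : List (Ev Op Proc)) := by
  intro σ₁ e σ₂ h
  simp at h

theorem Quiescent.append {s t : List (Ev Op Proc)} (hs : Quiescent s) (ht : Quiescent t) :
    Quiescent (s ++ t) := by
  intro σ₁ e σ₂ h he
  rcases List.append_eq_append_iff.1 h with ⟨a, rfl, hta⟩ | ⟨c, rfl, hc⟩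
  · exact ht a e σ₂ hta he
  · cases c with
    | nil => exact ht [] e σ₂ (by simpa using hc.symm) he
    | cons x c =>
      obtain ⟨rfl, rfl⟩ := List.cons.inj hc
      obtain ⟨e', he', hmatch⟩ := hs σ₁ e c rfl he
      exact ⟨e', List.mem_append_left t he', hmatch⟩

variable [DecidableEq Proc]

theorem quiescent_iff_forall_proj {σ : List (Ev Op Proc)} :
    Quiescent σ ↔ ∀ p, Quiescent (proj p σ) := by
  constructor
  · intro h p σ₁ e σ₂ hσ he
    obtain ⟨l₁, l₂, rfl, -, hl₂⟩ := List.filter_eq_append_iff.1 hσ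
    obtain ⟨m₁, m₂, rfl, -, hep, rfl⟩ := List.filter_eq_cons_iff.1 hl₂
    obtain ⟨e', he', hmatch⟩ := h (l₁ ++ m₁) e m₂ (by simp) he
    refine ⟨e', List.mem_filter.2 ⟨he', ?_⟩, hmatch⟩
    simpa [← hmatch.2.1] using hep
  · intro h σ₁ e σ₂ hσ he
    have hproj : proj e.2.1 σ = proj e.2.1 σ₁ ++ e :: proj e.2.1 σ₂ := by
      simp [hσ, proj]
    obtain ⟨e', he', hmatch⟩ := h e.2.1 _ e _ hproj he
    exact ⟨e', (List.mem_filter.1 he').1, hmatch⟩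

theorem Quiescent.of_procEquiv {u v : List (Ev Op Proc)} (hv : Quiescent v)
    (huv : ProcEquiv u v) : Quiescent u :=
  quiescent_iff_forall_proj.2 fun p => huv p ▸ quiescent_iff_forall_proj.1 hv p

theorem forall_quiescent_of_forall₂ {L' L : List (List (Ev Op Proc))}
    (hL : List.Forall₂ ProcEquiv L' L) (hq : ∀ u ∈ L, Quiescent u) :
    ∀ u ∈ L', Quiescent u := by
  induction hL with
  | nil => simp
  | cons hs _ ih =>
    simp only [List.forall_mem_cons] at hq ⊢
    exact ⟨hq.1.of_procEquiv hs, ih hq.2⟩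

end Quiescence

section Words

theorem map_inl_append_inr_inj {α β : Type*} {s s' : List α} {b : β} {w w' : List (α ⊕ β)}
    (h : s.map Sum.inl ++ Sum.inr b :: w = s'.map Sum.inl ++ Sum.inr b :: w') :
    s = s' ∧ w = w' := by
  induction s generalizing s' with
  | nil => cases s' <;> simp_all
  | cons a s ih =>
    cases s' with
    | nil => simp at h
    | cons a' s' =>
      simp only [List.map_cons, List.cons_append, List.cons.injEq, Sum.inl.injEq] at h
      obtain ⟨rfl, h⟩ := h
      simpa using ih h

theorem eq_map_inl_or_eq_map_inl_append_inr {α : Type*} :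
    ∀ w : List (α ⊕ Unit),
      (∃ s : List α, w = s.map Sum.inl) ∨
        ∃ (s : List α) (t : List (α ⊕ Unit)), w = s.map Sum.inl ++ Sum.inr () :: t
  | [] => .inl ⟨[], rfl⟩
  | Sum.inr () :: t => .inr ⟨[], t, rfl⟩
  | Sum.inl a :: t => by
    rcases eq_map_inl_or_eq_map_inl_append_inr t with ⟨s, rfl⟩ | ⟨s, t', rfl⟩
    · exact .inl ⟨a :: s, rfl⟩
    · exact .inr ⟨a :: s, t', rfl⟩

theorem piSigma_append (u v : List (EvD Op Proc)) : piSigma (u ++ v) = piSigma u ++ piSigma v :=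
  List.filterMap_append

theorem piSigma_map_inl (s : List (Ev Op Proc)) : piSigma (s.map Sum.inl) = s := by
  simp [piSigma, List.filterMap_map, Function.comp_def]

theorem piSigma_dd_cons (w : List (EvD Op Proc)) : piSigma (dd :: w) = piSigma w := rfl

def delimit (M : List (List (Ev Op Proc))) : List (EvD Op Proc) :=
  M.flatMap fun s => s.map Sum.inl ++ [dd]

theorem delimit_cons (s : List (Ev Op Proc)) (M : List (List (Ev Op Proc))) :
    delimit (s :: M) = s.map Sum.inl ++ dd :: delimit M := by
  simp [delimit]

-- `intercalate` cannot tell the empty run from a single empty piece.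
theorem sigmaDelta_nil : sigmaDelta ([] : List (List (Ev Op Proc))) = dd :: delimit [[]] := rfl

theorem sigmaDelta_eq_dd_cons_delimit {L : List (List (Ev Op Proc))} (hL : L ≠ []) :
    sigmaDelta L = dd :: delimit L := by
  obtain ⟨s, M, rfl⟩ := List.exists_cons_of_ne_nil hL
  suffices List.intercalate [dd] ((s :: M).map (List.map Sum.inl)) ++ [dd] = delimit (s :: M) by
    simp [sigmaDelta, ← this]
  clear hL
  induction M generalizing s with
  | nil => simp [delimit]
  | cons s' M ih =>
    have := ih s'
    simp only [List.map_cons] at this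
    simp [List.intercalate_cons_cons, delimit_cons, ← this]

theorem piSigma_delimit (M : List (List (Ev Op Proc))) : piSigma (delimit M) = M.flatten := by
  induction M with
  | nil => rfl
  | cons s M ih => rw [delimit_cons, piSigma_append, piSigma_map_inl, piSigma_dd_cons, ih]; rfl

end Words

section Projection

variable [DecidableEq Proc]

theorem projD_append (p : Proc) (u v : List (EvD Op Proc)) :
    projD p (u ++ v) = projD p u ++ projD p v :=
  List.filter_append ..

theorem projD_dd_cons (p : Proc) (w : List (EvD Op Proc)) : projD p (dd :: w) = dd :: projD p w :=
  List.filter_cons_of_pos rfl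

theorem projD_map_inl (p : Proc) (s : List (Ev Op Proc)) :
    projD p (s.map Sum.inl) = (proj p s).map Sum.inl := by
  simp [projD, proj, List.filter_map, Function.comp_def]

theorem projD_map_inl_append_dd (p : Proc) (s : List (Ev Op Proc)) (t : List (EvD Op Proc)) :
    projD p (s.map Sum.inl ++ dd :: t) = (proj p s).map Sum.inl ++ dd :: projD p t := by
  rw [projD_append, projD_map_inl, projD_dd_cons]

theorem projD_delimit (p : Proc) (M : List (List (Ev Op Proc))) :
    projD p (delimit M) = delimit (M.map (proj p)) := by
  induction M with
  | nil => rfl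
  | cons s M ih => rw [delimit_cons, projD_map_inl_append_dd, ih, List.map_cons, delimit_cons]

theorem projD_sigmaDelta (p : Proc) (L : List (List (Ev Op Proc))) :
    projD p (sigmaDelta L) = sigmaDelta (L.map (proj p)) := by
  rcases eq_or_ne L [] with rfl | hL
  · rfl
  · rw [sigmaDelta_eq_dd_cons_delimit hL, sigmaDelta_eq_dd_cons_delimit (by simpa using hL),
      projD_dd_cons, projD_delimit]

theorem map_proj_eq_of_forall₂ {L' L : List (List (Ev Op Proc))}
    (h : List.Forall₂ ProcEquiv L' L) (p : Proc) : L'.map (proj p) = L.map (proj p) := by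
  induction h with
  | nil => rfl
  | cons hs _ ih => rw [List.map_cons, List.map_cons, hs p, ih]

theorem approxD_sigmaDelta_of_forall₂ {L' L : List (List (Ev Op Proc))}
    (h : List.Forall₂ ProcEquiv L' L) : ApproxD (sigmaDelta L') (sigmaDelta L) := fun p => by
  rw [projD_sigmaDelta, projD_sigmaDelta, map_proj_eq_of_forall₂ h]

theorem ApproxD.symm {w w' : List (EvD Op Proc)} (h : ApproxD w w') : ApproxD w' w :=
  fun p => (h p).symm

variable [Nonempty Proc]

theorem eq_nil_of_approxD_nil {w : List (EvD Op Proc)} (h : ApproxD w []) : w = [] := by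
  obtain ⟨p⟩ := ‹Nonempty Proc›
  refine List.eq_nil_iff_forall_not_mem.2 fun x hx => ?_
  rcases x with e | u
  · have := h e.2.1
    simp only [projD, List.filter_nil, List.filter_eq_nil_iff] at this
    exact this _ hx (by simp)
  · have := h p
    simp only [projD, List.filter_nil, List.filter_eq_nil_iff] at this
    exact this _ hx rfl

theorem exists_of_approxD_map_inl_append_dd {w t : List (EvD Op Proc)} {s : List (Ev Op Proc)}
    (h : ApproxD w (s.map Sum.inl ++ dd :: t)) :
    ∃ s' w', w = s'.map Sum.inl ++ dd :: w' ∧ ProcEquiv s' s ∧ ApproxD w' t := by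
  rcases eq_map_inl_or_eq_map_inl_append_inr w with ⟨s', rfl⟩ | ⟨s', w', rfl⟩
  · obtain ⟨p⟩ := ‹Nonempty Proc›
    have hdd : dd ∈ projD p (s'.map Sum.inl) := by rw [h p, projD_map_inl_append_dd]; simp
    simp [projD_map_inl, dd] at hdd
  · have hinj (p : Proc) : proj p s' = proj p s ∧ projD p w' = projD p t := by
      apply map_inl_append_inr_inj (b := ())
      exact (projD_map_inl_append_dd p s' w').symm.trans
        ((h p).trans (projD_map_inl_append_dd p s t))
    exact ⟨s', w', rfl, fun p => (hinj p).1, fun p => (hinj p).2⟩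

theorem exists_of_approxD_dd_cons {w t : List (EvD Op Proc)} (h : ApproxD w (dd :: t)) :
    ∃ w', w = dd :: w' ∧ ApproxD w' t := by
  obtain ⟨s', w', rfl, hs', hw'⟩ := exists_of_approxD_map_inl_append_dd (s := []) h
  exact ⟨w', by rw [eq_nil_of_procEquiv_nil hs']; rfl, hw'⟩

theorem exists_of_approxD_delimit :
    ∀ (M : List (List (Ev Op Proc))) {w : List (EvD Op Proc)}, ApproxD w (delimit M) →
      ∃ M', List.Forall₂ ProcEquiv M' M ∧ w = delimit M'
  | [], _, h => ⟨[], .nil, eq_nil_of_approxD_nil h⟩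
  | s :: M, _, h => by
    rw [delimit_cons] at h
    obtain ⟨s', w', rfl, hs, hw⟩ := exists_of_approxD_map_inl_append_dd h
    obtain ⟨M', hM, rfl⟩ := exists_of_approxD_delimit M hw
    exact ⟨s' :: M', .cons hs hM, (delimit_cons s' M').symm⟩

theorem exists_of_approxD_sigmaDelta {w : List (EvD Op Proc)} {L : List (List (Ev Op Proc))}
    (h : ApproxD w (sigmaDelta L)) :
    ∃ L', List.Forall₂ ProcEquiv L' L ∧ w = sigmaDelta L' := by
  rcases eq_or_ne L [] with rfl | hL
  · rw [sigmaDelta_nil] at h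
    obtain ⟨w', rfl, hw'⟩ := exists_of_approxD_dd_cons h
    obtain ⟨_, _ | ⟨hs, hnil⟩, rfl⟩ := exists_of_approxD_delimit _ hw'
    rw [List.forall₂_nil_right_iff.1 hnil, eq_nil_of_procEquiv_nil hs]
    exact ⟨[], .nil, rfl⟩
  · rw [sigmaDelta_eq_dd_cons_delimit hL] at h
    obtain ⟨w', rfl, hw'⟩ := exists_of_approxD_dd_cons h
    obtain ⟨L', hL', rfl⟩ := exists_of_approxD_delimit L hw'
    refine ⟨L', hL', (sigmaDelta_eq_dd_cons_delimit ?_).symm⟩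
    rintro rfl
    exact hL (List.forall₂_nil_left_iff.1 hL')

end Projection

section QuiescenceAtDelta

def QuiescentAtDelta (w : List (EvD Op Proc)) : Prop :=
  ∀ u, u ++ [dd] <+: w → Quiescent (piSigma u)

theorem quiescentAtDelta_nil : QuiescentAtDelta ([] : List (EvD Op Proc)) :=
  fun u hu => by simpa using hu.length_le

theorem QuiescentAtDelta.dd_cons {w : List (EvD Op Proc)} (hw : QuiescentAtDelta w) :
    QuiescentAtDelta (dd :: w)
  | [], _ => quiescent_nil
  | _ :: u, hu => by
    rw [List.cons_append, List.cons_prefix_cons] at hu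
    obtain ⟨rfl, hu⟩ := hu
    exact hw u hu

theorem exists_eq_map_inl_append_of_prefix {α β : Type*} {s : List α} {b : β}
    {u w : List (α ⊕ β)} (h : u ++ [Sum.inr b] <+: s.map Sum.inl ++ w) :
    ∃ u', u = s.map Sum.inl ++ u' ∧ u' ++ [Sum.inr b] <+: w := by
  induction s generalizing u with
  | nil => exact ⟨u, rfl, h⟩
  | cons a s ih =>
    cases u with
    | nil => simp at h
    | cons x u =>
      rw [List.map_cons, List.cons_append, List.cons_append, List.cons_prefix_cons] at h
      obtain ⟨rfl, h⟩ := h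
      obtain ⟨u', rfl, h'⟩ := ih h
      exact ⟨u', rfl, h'⟩

theorem QuiescentAtDelta.map_inl_append {s : List (Ev Op Proc)} {w : List (EvD Op Proc)}
    (hs : Quiescent s) (hw : QuiescentAtDelta w) : QuiescentAtDelta (s.map Sum.inl ++ w) :=
  fun u hu => by
    obtain ⟨u', rfl, hu'⟩ := exists_eq_map_inl_append_of_prefix hu
    rw [piSigma_append, piSigma_map_inl]
    exact hs.append (hw u' hu')

theorem quiescentAtDelta_delimit {M : List (List (Ev Op Proc))} (hM : ∀ s ∈ M, Quiescent s) :
    QuiescentAtDelta (delimit M) := by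
  induction M with
  | nil => exact quiescentAtDelta_nil
  | cons s M ih =>
    simp only [List.forall_mem_cons] at hM
    rw [delimit_cons]
    exact QuiescentAtDelta.map_inl_append hM.1 (ih hM.2).dd_cons

theorem quiescentAtDelta_sigmaDelta {L : List (List (Ev Op Proc))}
    (hL : ∀ s ∈ L, Quiescent s) : QuiescentAtDelta (sigmaDelta L) := by
  rcases eq_or_ne L [] with rfl | hne
  · rw [sigmaDelta_nil]
    refine (quiescentAtDelta_delimit fun s hs => ?_).dd_cons
    rw [List.mem_singleton.1 hs]
    exact quiescent_nil
  · rw [sigmaDelta_eq_dd_cons_delimit hne]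
    exact (quiescentAtDelta_delimit hL).dd_cons

end QuiescenceAtDelta

section Swaps

variable {A : Type*} {I : A → A → Prop}

theorem SwapStep.cons {w w' : List A} (c : A) (h : SwapStep I w w') :
    SwapStep I (c :: w) (c :: w') := by
  obtain ⟨u, v, a, b, hab⟩ := h
  exact SwapStep.swap (c :: u) v a b hab

theorem reflTransGen_swapStep_cons {w w' : List A} (c : A)
    (h : Relation.ReflTransGen (SwapStep I) w w') :
    Relation.ReflTransGen (SwapStep I) (c :: w) (c :: w') :=
  h.lift (c :: ·) fun _ _ => SwapStep.cons c

theorem reflTransGen_swapStep_cons_append (a : A) :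
    ∀ (u v : List A), (∀ b ∈ u, I a b) →
      Relation.ReflTransGen (SwapStep I) (a :: (u ++ v)) (u ++ a :: v)
  | [], _, _ => .refl
  | c :: u, v, hu => by
    simp only [List.forall_mem_cons] at hu
    have hswap : SwapStep I (a :: c :: (u ++ v)) (c :: a :: (u ++ v)) :=
      SwapStep.swap [] (u ++ v) a c hu.1
    exact .head hswap (reflTransGen_swapStep_cons c (reflTransGen_swapStep_cons_append a u v hu.2))

end Swaps

section Traces

variable [DecidableEq Proc]

theorem SwapStep.projD_eq {w w' : List (EvD Op Proc)} (h : SwapStep IndepRD w w') (p : Proc) :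
    projD p w = projD p w' := by
  obtain ⟨u, v, _, _, x, y, rfl, rfl, hxy⟩ := h
  by_cases hx : x.2.1 = p
  · have hy : y.2.1 ≠ p := fun hy => hxy (hx.trans hy.symm)
    simp [projD, hx, hy]
  · by_cases hy : y.2.1 = p <;> simp [projD, hx, hy]

theorem approxD_of_reflTransGen {w w' : List (EvD Op Proc)}
    (h : Relation.ReflTransGen (SwapStep IndepRD) w w') : ApproxD w w' := by
  induction h with
  | refl => exact fun _ => rfl
  | tail _ hstep ih => exact fun p => (ih p).trans (hstep.projD_eq p)

theorem exists_of_approxD_inl_cons {e : Ev Op Proc} {t w' : List (EvD Op Proc)}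
    (h : ApproxD (Sum.inl e :: t) w') :
    ∃ u v, w' = u ++ Sum.inl e :: v ∧ (∀ b ∈ u, IndepRD (Sum.inl e) b) ∧
      ApproxD t (u ++ v) := by
  have he : projD e.2.1 w' = Sum.inl e :: projD e.2.1 t := by
    rw [← h]; simp [projD]
  obtain ⟨u, v, rfl, hu, -, hv⟩ := List.filter_eq_cons_iff.1 he
  refine ⟨u, v, rfl, ?_, fun q => ?_⟩
  · rintro (y | _) hy
    · exact ⟨e, y, rfl, rfl, fun hey => hu _ hy (by simp [hey])⟩
    · exact absurd rfl (hu _ hy)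
  · by_cases hq : e.2.1 = q
    · subst hq
      rw [projD_append, show projD e.2.1 u = [] from List.filter_eq_nil_iff.2 hu, ← hv]
      rfl
    · simpa [projD, hq] using h q

variable [Nonempty Proc]

theorem reflTransGen_of_approxD :
    ∀ {w w' : List (EvD Op Proc)}, ApproxD w w' → Relation.ReflTransGen (SwapStep IndepRD) w w'
  | [], _, h => by rw [eq_nil_of_approxD_nil h.symm]
  | Sum.inl _ :: _, _, h => by
    obtain ⟨u, v, rfl, hu, ht⟩ := exists_of_approxD_inl_cons h
    exact (reflTransGen_swapStep_cons _ (reflTransGen_of_approxD ht)).trans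
      (reflTransGen_swapStep_cons_append _ u v hu)
  | Sum.inr () :: _, _, h => by
    obtain ⟨w', rfl, hw'⟩ := exists_of_approxD_dd_cons h.symm
    exact reflTransGen_swapStep_cons _ (reflTransGen_of_approxD hw'.symm)

theorem approxD_iff_reflTransGen {w w' : List (EvD Op Proc)} :
    ApproxD w w' ↔ Relation.ReflTransGen (SwapStep IndepRD) w w' :=
  ⟨reflTransGen_of_approxD, approxD_of_reflTransGen⟩

theorem mem_LR_iff_exists_approxD {S : Set (List (EvD Op Proc))} {w' : List (EvD Op Proc)} :
    w' ∈ LR S ↔ ∃ w ∈ S, ApproxD w w' := by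
  simp only [LR, Set.mem_ofPred_eq, approxD_iff_reflTransGen]

end Traces

theorem qsc_allowed_iff_general [DecidableEq Proc] [Nonempty Proc]
    (L_S : Set (List (Ev Op Proc)))
    (L : List (List (Ev Op Proc)))
    (hpieces : ∀ u ∈ L, u ≠ [] ∧ Legal u ∧ ETEQ u) :
    ((∃ L' : List (List (Ev Op Proc)),
        List.Forall₂ (fun u' u => ∀ p : Proc, proj p u' = proj p u) L' L ∧
        L'.flatten ∈ L_S) ↔
      (∃ w ∈ Sdelta L_S, ApproxD w (sigmaDelta L))) ∧
    ((∃ w ∈ Sdelta L_S, ApproxD w (sigmaDelta L)) ↔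
      sigmaDelta L ∈ LR (Sdelta L_S)) := by
  have hquiescent : ∀ u ∈ L, Quiescent u := fun u hu => (hpieces u hu).2.2.1
  refine ⟨⟨?_, ?_⟩, mem_LR_iff_exists_approxD.symm⟩
  · rintro ⟨L', hL', hmem⟩
    have hmem' : piSigma (sigmaDelta L') ∈ L_S := by rwa [piSigma_sigmaDelta]
    exact ⟨sigmaDelta L',
      ⟨hmem', quiescentAtDelta_sigmaDelta (forall_quiescent_of_forall₂ hL' hquiescent)⟩,
      approxD_sigmaDelta_of_forall₂ hL'⟩
  · rintro ⟨w, ⟨hmem, -⟩, happrox⟩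
    obtain ⟨L', hL', rfl⟩ := exists_of_approxD_sigmaDelta happrox
    exact ⟨L', hL', by rwa [piSigma_sigmaDelta] at hmem⟩

/-- Membership for quiescent sequential consistency: σ is allowed by L_S under quiescent
sequential consistency iff some w ∈ S_δ satisfies w ≈ σ^δ, iff σ^δ ∈ 𝓛_R(S_δ). -/
theorem qsc_allowed_iff [DecidableEq Proc] [Nonempty Proc]
    (L_S : Set (List (Ev Op Proc)))
    (hLS : ∀ w ∈ L_S, SequentialRun w ∧ Quiescent w)
    (L : List (List (Ev Op Proc)))
    (hlegal : Legal L.flatten) (hquies : Quiescent L.flatten)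
    (hpieces : ∀ u ∈ L, u ≠ [] ∧ Legal u ∧ ETEQ u) :
    ((∃ L' : List (List (Ev Op Proc)),
        List.Forall₂ (fun u' u => ∀ p : Proc, proj p u' = proj p u) L' L ∧
        L'.flatten ∈ L_S) ↔
      (∃ w ∈ Sdelta L_S, ApproxD w (sigmaDelta L))) ∧
    ((∃ w ∈ Sdelta L_S, ApproxD w (sigmaDelta L)) ↔
      sigmaDelta L ∈ LR (Sdelta L_S)) :=
  qsc_allowed_iff_general L_S L hpieces
end

section
/- Fix a type Γ, a natural number n ≥ 1, and functions α, β : Fin n → List Γ (an instance of Post's Correspondence Problem). Let p₁ ≠ p₂ be two distinct processes, for a ∈ Γ and a process p write eᵃᵖ for the invocation event of operation a by process p and ēᵃᵖ for the matching response, and let e, ē be an invocation/response pair by process p₁ for an operation not in Γ. Define toΣ(γ, p) = γ.flatMap (a ↦ [eᵃᵖ, ēᵃᵖ]), w(l) = l.flatMap (i ↦ toΣ(α i, p₁) ++ toΣ(β i, p₂)), and the language L_P = { [e] ++ w(l) ++ [ē] | l : List (Fin n), l ≠ [] }. Then L_P contains a word [e] ++ σ ++ [ē] such that strip(π_{p₁}(σ))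 = strip(π_{p₂}(σ)) if and only if there exists a non-empty list l : List (Fin n) with l.flatMap α = l.flatMap β (i.e., the PCP instance (α, β) has a solution). -/
variable {Op Proc : Type*}

/-- strip: erase the process component of every event. -/
def strip (τ : List (Ev Op Proc)) : List (Op × Bool) :=
  τ.map (fun e => (e.1, e.2.2))

/-- toΣ(γ, p): encode a word γ ∈ Γ* as a run of matching invocation/response pairs
of process p (operations drawn from Γ ⊕ Unit via the left injection). -/
def toSigma {Γ Proc : Type*} (γ : List Γ) (p : Proc) : List (Ev (Γ ⊕ Unit) Proc) :=
  γ.flatMap (fun a => [(Sum.inl a, p, true), (Sum.inl a, p, false)])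

/-- w(l): the encoding of a sequence of PCP indices. -/
def pcpWord {Γ Proc : Type*} {n : ℕ} (α β : Fin n → List Γ) (p₁ p₂ : Proc)
    (l : List (Fin n)) : List (Ev (Γ ⊕ Unit) Proc) :=
  l.flatMap (fun i => toSigma (α i) p₁ ++ toSigma (β i) p₂)

/-- The language L_P = { [e] ++ w(l) ++ [ē] | l ≠ [] }, where e/ē is an
invocation/response pair of process p₁ for the extra operation outside Γ. -/
def pcpLang {Γ Proc : Type*} {n : ℕ} (α β : Fin n → List Γ) (p₁ p₂ : Proc) :
    Set (List (Ev (Γ ⊕ Unit) Proc)) :=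
  {x | ∃ l : List (Fin n), l ≠ [] ∧
    x = [((Sum.inr (), p₁, true) : Ev (Γ ⊕ Unit) Proc)] ++ pcpWord α β p₁ p₂ l ++
        [((Sum.inr (), p₁, false) : Ev (Γ ⊕ Unit) Proc)]}

/-! Projecting `w(l)` onto `p₁` leaves `toΣ(l.flatMap α, p₁)` and onto `p₂` leaves
`toΣ(l.flatMap β, p₂)`. Once processes are erased, `toΣ` no longer depends on the process and is
injective in the word (its invocations spell the word out), so the two projections agree after
stripping exactly when `l` solves the PCP instance. -/

section Encoding

variable {Γ : Type*}

lemma proj_append [DecidableEq Proc] (p : Proc) (σ τ : List (Ev Op Proc)) :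
    proj p (σ ++ τ) = proj p σ ++ proj p τ :=
  List.filter_append ..

lemma proj_flatMap [DecidableEq Proc] {ι : Type*} (p : Proc) (l : List ι)
    (f : ι → List (Ev Op Proc)) : proj p (l.flatMap f) = l.flatMap fun i => proj p (f i) :=
  List.filter_flatMap ..

lemma toSigma_flatMap {ι : Type*} (l : List ι) (γ : ι → List Γ) (p : Proc) :
    toSigma (l.flatMap γ) p = l.flatMap fun i => toSigma (γ i) p :=
  List.flatMap_assoc ..

lemma proj_toSigma_self [DecidableEq Proc] (γ : List Γ) (p : Proc) :
    proj p (toSigma γ p) = toSigma γ p :=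
  List.filter_eq_self.2 <| by simp [toSigma]

lemma proj_toSigma_of_ne [DecidableEq Proc] (γ : List Γ) {p q : Proc} (h : p ≠ q) :
    proj q (toSigma γ p) = [] :=
  List.filter_eq_nil_iff.2 <| by simp +contextual [toSigma, h]

lemma strip_toSigma_eq (γ : List Γ) (p q : Proc) :
    strip (toSigma γ p) = strip (toSigma γ q) := by
  simp [strip, toSigma, List.map_flatMap]

lemma strip_toSigma_injective (p : Proc) :
    Function.Injective fun γ : List Γ => strip (toSigma γ p) := by
  refine Function.LeftInverse.injective
    (g := List.filterMap fun x => if x.2 then x.1.getLeft? else none) fun γ => ?_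
  simp [strip, toSigma, List.map_flatMap, List.filterMap_flatMap]

section pcpWord

variable [DecidableEq Proc] {n : ℕ} (α β : Fin n → List Γ) {p₁ p₂ : Proc}

lemma proj_pcpWord_left (hp : p₁ ≠ p₂) (l : List (Fin n)) :
    proj p₁ (pcpWord α β p₁ p₂ l) = toSigma (l.flatMap α) p₁ := by
  simp only [pcpWord, proj_flatMap, proj_append, proj_toSigma_self,
    proj_toSigma_of_ne _ hp.symm, List.append_nil, toSigma_flatMap]

lemma proj_pcpWord_right (hp : p₁ ≠ p₂) (l : List (Fin n)) :
    proj p₂ (pcpWord α β p₁ p₂ l) = toSigma (l.flatMap β) p₂ := by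
  simp only [pcpWord, proj_flatMap, proj_append, proj_toSigma_self,
    proj_toSigma_of_ne _ hp, List.nil_append, toSigma_flatMap]

lemma strip_proj_pcpWord_eq_iff (hp : p₁ ≠ p₂) (l : List (Fin n)) :
    strip (proj p₁ (pcpWord α β p₁ p₂ l)) = strip (proj p₂ (pcpWord α β p₁ p₂ l)) ↔
      l.flatMap α = l.flatMap β := by
  rw [proj_pcpWord_left α β hp, proj_pcpWord_right α β hp, strip_toSigma_eq _ p₂ p₁]
  exact (strip_toSigma_injective p₁).eq_iff

end pcpWord

end Encoding

theorem pcpLang_iff_pcp_solution_general {Γ Proc : Type*} [DecidableEq Proc]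
    {n : ℕ} (α β : Fin n → List Γ)
    (p₁ p₂ : Proc) (hp : p₁ ≠ p₂) :
    (∃ σ : List (Ev (Γ ⊕ Unit) Proc),
        ([((Sum.inr (), p₁, true) : Ev (Γ ⊕ Unit) Proc)] ++ σ ++
          [((Sum.inr (), p₁, false) : Ev (Γ ⊕ Unit) Proc)]) ∈ pcpLang α β p₁ p₂ ∧
        strip (proj p₁ σ) = strip (proj p₂ σ)) ↔
      ∃ l : List (Fin n), l ≠ [] ∧ l.flatMap α = l.flatMap β := by
  constructor
  · rintro ⟨σ, ⟨l, hl, hσ⟩, hstrip⟩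
    obtain rfl : σ = pcpWord α β p₁ p₂ l := by simpa using hσ
    exact ⟨l, hl, (strip_proj_pcpWord_eq_iff α β hp l).1 hstrip⟩
  · rintro ⟨l, hl, hsol⟩
    exact ⟨pcpWord α β p₁ p₂ l, ⟨l, hl, rfl⟩, (strip_proj_pcpWord_eq_iff α β hp l).2 hsol⟩

/-- L_P contains a word [e] ++ σ ++ [ē] whose projections on p₁ and p₂ agree after
erasing processes iff the PCP instance (α, β) has a solution. -/
theorem pcpLang_iff_pcp_solution {Γ Proc : Type*} [DecidableEq Proc]
    {n : ℕ} (hn : 1 ≤ n) (α β : Fin n → List Γ)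
    (p₁ p₂ : Proc) (hp : p₁ ≠ p₂) :
    (∃ σ : List (Ev (Γ ⊕ Unit) Proc),
        ([((Sum.inr (), p₁, true) : Ev (Γ ⊕ Unit) Proc)] ++ σ ++
          [((Sum.inr (), p₁, false) : Ev (Γ ⊕ Unit) Proc)]) ∈ pcpLang α β p₁ p₂ ∧
        strip (proj p₁ σ) = strip (proj p₂ σ)) ↔
      ∃ l : List (Fin n), l ≠ [] ∧ l.flatMap α = l.flatMap β :=
  pcpLang_iff_pcp_solution_general α β p₁ p₂ hp
end
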